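/- arXiv:1804.01504 — 2 statements merged into one kernel-verified Lean document; each statement's English description precedes it below -/
import Mathlib

section
/- Fix n ≥ 2 and m = n(n−1)/2. For every x ∈ (0,∞)^n and z ∈ (ℝ∖{0})^m, all the corner minors Δ_i^{(k)}(az_0(x,z)) with 1 ≤ i < k ≤ n are nonzero real numbers; their signs (sgn Δ_i^{(k)}(az_0(x,z)))_{1≤i<k≤n} ∈ {±1}^m depend only on the signs (sgn z_1,…,sgn z_m), and the induced map {±1}^m → {±1}^m, sending the sign pattern of z to the sign pattern of the corner minors, is a bijection. Consequently, the map az_0 gives a one-to-one correspondence between the 2^m sign patterns of z and the 2^m chambers of real matrices in AN cut out by the hypersurfaces Δ_i^{(k)} = 0. -/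
open Matrix Finset Filter

noncomputable section

/-- Bottom-right `k × k` principal submatrix of an `n × n` matrix. -/
def corner (n k : ℕ) (hk : k ≤ n) (X : Matrix (Fin n) (Fin n) ℂ) :
    Matrix (Fin k) (Fin k) ℂ :=
  Matrix.of fun i j =>
    X ⟨n - k + i.val, by have := i.isLt; omega⟩ ⟨n - k + j.val, by have := j.isLt; omega⟩

theorem corner_isHermitian {n k : ℕ} (hk : k ≤ n) {A : Matrix (Fin n) (Fin n) ℂ}
    (hA : A.IsHermitian) : (corner n k hk A).IsHermitian := by
  ext i j
  simpa [corner, Matrix.conjTranspose_apply] using hA.apply _ _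

/-- The eigenvalues of a Hermitian matrix, with multiplicity, sorted in decreasing order:
`sortedEig hB i.rev` is increasing in `i`, so `sortedEig hB 0` is the largest eigenvalue. -/
def sortedEig {k : ℕ} {B : Matrix (Fin k) (Fin k) ℂ} (hB : B.IsHermitian) : Fin k → ℝ :=
  fun i => hB.eigenvalues (Tuple.sort hB.eigenvalues i.rev)

open scoped Classical in
/-- The Gelfand–Zeitlin function `λ_i^{(k)}(A)` (`1 ≤ i ≤ k ≤ n`, one-based indexing):
the `i`-th largest eigenvalue (with multiplicity) of the bottom-right `k × k`
principal submatrix of `A`.  Junk value `0` outside the valid index range or if `A`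
is not Hermitian. -/
def GZ (n : ℕ) (A : Matrix (Fin n) (Fin n) ℂ) (k i : ℕ) : ℝ :=
  if h : A.IsHermitian ∧ 1 ≤ i ∧ i ≤ k ∧ k ≤ n then
    sortedEig (corner_isHermitian h.2.2.2 h.1) ⟨i - 1, by omega⟩
  else 0

/-- `ℓ_i^{(k)}(A) = λ_1^{(k)}(A) + ⋯ + λ_i^{(k)}(A)`; in particular `ellGZ n A k 0 = 0`. -/
def ellGZ (n : ℕ) (A : Matrix (Fin n) (Fin n) ℂ) (k i : ℕ) : ℝ :=
  ∑ j ∈ Finset.Icc 1 i, GZ n A k j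

/-- The set `AN` of upper triangular complex matrices with positive real diagonal entries. -/
def AN (n : ℕ) : Set (Matrix (Fin n) (Fin n) ℂ) :=
  {b | (∀ i j : Fin n, j < i → b i j = 0) ∧ ∀ i : Fin n, 0 < (b i i).re ∧ (b i i).im = 0}

/-- The corner minor `Δ_i^{(k)}(b)`: determinant of the `i × i` submatrix with
(one-based) rows `n-k+1, …, n-k+i` and columns `n-i+1, …, n`.  Junk value `0`
outside the valid index range. -/
def cornerMinor (n k i : ℕ) (b : Matrix (Fin n) (Fin n) ℂ) : ℂ :=
  if h : 1 ≤ i ∧ i ≤ k ∧ k ≤ n then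
    Matrix.det (Matrix.of fun p q : Fin i =>
      b ⟨n - k + p.val, by have := p.isLt; omega⟩ ⟨n - i + q.val, by have := q.isLt; omega⟩)
  else 0

open scoped Classical in
/-- The minor `det (b_{I,J})` with rows `I` and columns `J` (taken in increasing order);
junk value `0` if `I.card ≠ J.card`. -/
def subMinor {n : ℕ} (b : Matrix (Fin n) (Fin n) ℂ) (I J : Finset (Fin n)) : ℂ :=
  if h : I.card = J.card then
    Matrix.det (Matrix.of fun p q : Fin I.card =>
      b ((I.orderIsoOfFin rfl) p) ((J.orderIsoOfFin h.symm) q))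
  else 0

/-- A triangular array `L k i = ℓ_i^{(k)}` (the convention `ℓ_0^{(k)} = 0` is to be built
into `L`) lies in `C^δ`: the rhombus inequalities hold with margin `δ`. -/
def inCdelta (n : ℕ) (δ : ℝ) (L : ℕ → ℕ → ℝ) : Prop :=
  ∀ i k : ℕ, 1 ≤ i → i ≤ k → k < n →
    L (k+1) i + L k (i-1) > L (k+1) (i-1) + L k i + δ ∧
    L (k+1) i + L k i > L (k+1) (i+1) + L k (i-1) + δ

/-- `e_j(z) = I + z·E_{j,j+1}` (one-based `j`): the entry in (one-based) row `j`,
column `j+1` equals `z`. -/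
def ejmat (n : ℕ) (j : ℕ) (z : ℂ) : Matrix (Fin n) (Fin n) ℂ :=
  1 + Matrix.of (fun p q : Fin n => if p.val + 1 = j ∧ q.val + 1 = j + 1 then z else 0)

/-- The standard reduced word `i_0 = (1,…,n−1, 1,…,n−2, …, 1,2, 1)` of length `n(n-1)/2`. -/
def word (n : ℕ) : List ℕ :=
  ((List.range (n-1)).reverse).flatMap (fun r => (List.range (r+1)).map (· + 1))

/-- `az_0(x,z) = diag(x_1,…,x_n)·e_{i_1}(z_1)⋯e_{i_m}(z_m)` (one-based `x`, `z`),
where `(i_1,…,i_m)` is the standard reduced word. -/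
def az0 (n : ℕ) (x z : ℕ → ℂ) : Matrix (Fin n) (Fin n) ℂ :=
  Matrix.diagonal (fun p : Fin n => x (p.val + 1)) *
    ((word n).zipIdx.map (fun q => ejmat n q.1 (z (q.2 + 1)))).prod

/-- The (one-based) rows `n-k+1, …, n` as a finset of `Fin n`. -/
def rowsFrom (n k : ℕ) : Finset (Fin n) :=
  Finset.univ.filter (fun p : Fin n => n - k ≤ p.val)

/-- `Σ |det(B_{I,J})|²`, the sum over all `I, J ⊆ {n−k+1,…,n}` with `|I| = |J| = i`. -/
def GZsum (n k i : ℕ) (B : Matrix (Fin n) (Fin n) ℂ) : ℝ :=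
  ∑ I ∈ Finset.powersetCard i (rowsFrom n k), ∑ J ∈ Finset.powersetCard i (rowsFrom n k),
    ‖subMinor B I J‖ ^ 2

/-- `B_t(w) = az_0((e^{t w_1},…,e^{t w_n}), (e^{t w_{n+1}},…,e^{t w_{n+m}}))`. -/
def Bt (n : ℕ) (w : ℕ → ℝ) (t : ℝ) : Matrix (Fin n) (Fin n) ℂ :=
  az0 n (fun j => (Real.exp (t * w j) : ℂ)) (fun j => (Real.exp (t * w (n + j)) : ℂ))

/-- `B_t(w,φ) = az_0((e^{t w_1},…,e^{t w_n}), (e^{t w_{n+1} + √−1 φ_1},…,e^{t w_{n+m} + √−1 φ_m}))`. -/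
def Btphase (n : ℕ) (w φ : ℕ → ℝ) (t : ℝ) : Matrix (Fin n) (Fin n) ℂ :=
  az0 n (fun j => (Real.exp (t * w j) : ℂ))
    (fun j => Complex.exp ((t * w (n + j) : ℝ) + (φ j : ℂ) * Complex.I))

/-- `az_0(x,z)` for real `x`, `z`. -/
def az0R (n : ℕ) (x z : ℕ → ℝ) : Matrix (Fin n) (Fin n) ℂ :=
  az0 n (fun j => (x j : ℂ)) (fun j => (z j : ℂ))

namespace S18

def Bmat (n s : ℕ) (z : ℕ → ℂ) : Matrix (Fin n) (Fin n) ℂ :=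
  ((List.range s).map (fun j => ejmat n (j+1) (z (j+1)))).prod

def Qs (n : ℕ) : ℕ → (ℕ → ℂ) → Matrix (Fin n) (Fin n) ℂ
  | 0, _ => 1
  | (s+1), z => Bmat n s z * Qs n s (fun j => z (j + s))

def zfac : ℕ → ℕ → ℕ → (ℕ → ℂ) → ℂ
  | _, _, 0, _ => 1
  | s, k, (i+1), z =>
      (∏ t ∈ Finset.Icc (s-k+i+1) (s-1), z t) * zfac (s-1) (k-1) i (fun j => z (j + (s-1)))

def zfacR : ℕ → ℕ → ℕ → (ℕ → ℝ) → ℝ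
  | _, _, 0, _ => 1
  | s, k, (i+1), z =>
      (∏ t ∈ Finset.Icc (s-k+i+1) (s-1), z t) * zfacR (s-1) (k-1) i (fun j => z (j + (s-1)))

lemma Icc_insert {a b : ℕ} (h : a ≤ b) :
    Finset.Icc a b = insert a (Finset.Icc (a+1) b) := by
  ext t; simp only [Finset.mem_Icc, Finset.mem_insert]; omega

lemma prod_Icc_bot {M : Type*} [CommMonoid M] {a b : ℕ} (h : a ≤ b) (f : ℕ → M) :
    ∏ t ∈ Finset.Icc a b, f t = f a * ∏ t ∈ Finset.Icc (a+1) b, f t := by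
  rw [Icc_insert h, Finset.prod_insert (by simp)]

lemma Bmat_succ (n s : ℕ) (z : ℕ → ℂ) :
    Bmat n (s+1) z = Bmat n s z * ejmat n (s+1) (z (s+1)) := by
  unfold Bmat
  rw [List.range_succ, List.map_append, List.prod_append, List.map_singleton,
    List.prod_singleton]

lemma Bmat_apply (n : ℕ) : ∀ (s : ℕ), s < n → ∀ (z : ℕ → ℂ) (p q : Fin n),
    Bmat n s z p q = if p = q then 1
      else if p < q ∧ q.val ≤ s then ∏ t ∈ Finset.Icc (p.val+1) q.val, z t else 0 := by
  intro s
  induction s with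
  | zero =>
      intro _ z p q
      simp only [Bmat, List.range_zero, List.map_nil, List.prod_nil]
      rcases eq_or_ne p q with rfl | h
      · simp [Matrix.one_apply]
      · simp only [Matrix.one_apply, if_neg h]
        rw [if_neg (by simp only [Fin.lt_def]; omega)]
  | succ s ih =>
      intro hs z p q
      rw [Bmat_succ]
      have hsn : s < n := by omega
      rw [Matrix.mul_apply]
      have hcol : ∀ t : Fin n, ejmat n (s+1) (z (s+1)) t q =
          (if t = q then 1 else 0) + (if t.val = s ∧ q.val = s + 1 then z (s+1) else 0) := by
        intro t
        simp only [ejmat, Matrix.add_apply, Matrix.one_apply, Matrix.of_apply]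
        congr 1
        by_cases h : t.val = s ∧ q.val = s+1
        · rw [if_pos h, if_pos (by omega)]
        · rw [if_neg h, if_neg (by omega)]
      simp only [hcol, mul_add, Finset.sum_add_distrib, mul_ite, mul_one, mul_zero]
      rw [Finset.sum_ite_eq' Finset.univ q (fun t => Bmat n s z p t)]
      simp only [Finset.mem_univ, if_pos]
      by_cases hq : q.val = s + 1
      · have hrow : ∀ t : Fin n,
            (if t.val = s ∧ q.val = s+1 then Bmat n s z p t * z (s+1) else 0) =
            (if t = (⟨s, hsn⟩ : Fin n) then Bmat n s z p ⟨s, hsn⟩ * z (s+1) else 0) := by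
          intro t
          by_cases ht : t = (⟨s, hsn⟩ : Fin n)
          · subst ht; rw [if_pos ⟨rfl, hq⟩, if_pos rfl]
          · rw [if_neg (fun h => ht (Fin.ext h.1)), if_neg ht]
        rw [Finset.sum_congr rfl (fun t _ => hrow t),
          Finset.sum_ite_eq' Finset.univ (⟨s, hsn⟩ : Fin n)]
        simp only [Finset.mem_univ, if_pos]
        rw [ih hsn z p q, ih hsn z p ⟨s, hsn⟩]
        rcases eq_or_ne p q with rfl | hpq
        · have h1 : ¬ p = (⟨s, hsn⟩ : Fin n) := by simp only [Fin.ext_iff]; omega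
          have h2 : ¬ (p < (⟨s, hsn⟩ : Fin n) ∧ ((⟨s, hsn⟩ : Fin n) : ℕ) ≤ s) := by
            simp only [Fin.lt_def]; omega
          rw [if_pos rfl, if_pos rfl, if_neg h1, if_neg h2, zero_mul, add_zero]
        · have hfalse : ¬ (p < q ∧ (q : ℕ) ≤ s) := by simp only [Fin.lt_def]; omega
          rw [if_neg hpq, if_neg hpq, if_neg hfalse, zero_add]
          rcases lt_trichotomy p.val s with hps | hps | hps
          · have h1 : ¬ p = (⟨s, hsn⟩ : Fin n) := by simp only [Fin.ext_iff]; omega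
            have h2 : (p < (⟨s, hsn⟩ : Fin n) ∧ ((⟨s, hsn⟩ : Fin n) : ℕ) ≤ s) := by
              simp only [Fin.lt_def]; exact ⟨hps, le_rfl⟩
            have h3 : (p < q ∧ (q : ℕ) ≤ s + 1) := by simp only [Fin.lt_def]; omega
            rw [if_neg h1, if_pos h2, if_pos h3]
            show (∏ t ∈ Finset.Icc (p.val+1) s, z t) * z (s+1) = ∏ t ∈ Finset.Icc (p.val+1) (q : ℕ), z t
            rw [show ((q : ℕ)) = s + 1 from hq, Finset.prod_Icc_succ_top (by omega)]
          · have h1 : p = (⟨s, hsn⟩ : Fin n) := by simp only [Fin.ext_iff]; omega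
            have h3 : (p < q ∧ (q : ℕ) ≤ s + 1) := by simp only [Fin.lt_def]; omega
            rw [if_pos h1, if_pos h3, one_mul]
            rw [show ((q : ℕ)) = s + 1 from hq]
            have : Finset.Icc (p.val+1) (s+1) = {s+1} := by
              ext t; simp only [Finset.mem_Icc, Finset.mem_singleton]; omega
            rw [this, Finset.prod_singleton]
          · have hp2 : s + 1 < p.val := by
              rcases Nat.lt_or_ge (s+1) p.val with h | h
              · exact h
              · exfalso; exact hpq (Fin.ext (by omega))
            have h1 : ¬ p = (⟨s, hsn⟩ : Fin n) := by simp only [Fin.ext_iff]; omega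
            have h2 : ¬ (p < (⟨s, hsn⟩ : Fin n) ∧ ((⟨s, hsn⟩ : Fin n) : ℕ) ≤ s) := by
              simp only [Fin.lt_def]; omega
            have h3 : ¬ (p < q ∧ (q : ℕ) ≤ s + 1) := by simp only [Fin.lt_def]; omega
            rw [if_neg h1, if_neg h2, if_neg h3, zero_mul]
      · have hrow : ∀ t : Fin n,
            (if t.val = s ∧ q.val = s+1 then Bmat n s z p t * z (s+1) else 0) = 0 := by
          intro t; rw [if_neg (by omega)]
        rw [Finset.sum_congr rfl (fun t _ => hrow t), Finset.sum_const_zero, add_zero, ih hsn]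
        rcases eq_or_ne p q with rfl | h
        · simp
        · rw [if_neg h, if_neg h]
          by_cases hlt : p < q ∧ q.val ≤ s
          · rw [if_pos hlt, if_pos ⟨hlt.1, by omega⟩]
          · rw [if_neg hlt, if_neg (by omega)]

lemma Qs_apply_of_ge (n : ℕ) : ∀ (s : ℕ), s ≤ n → ∀ (z : ℕ → ℂ) (r c : Fin n), s ≤ c.val →
    Qs n s z r c = if r = c then 1 else 0 := by
  intro s
  induction s with
  | zero => intro _ z r c _; simp [Qs, Matrix.one_apply]
  | succ s ih =>
      intro hs z r c hc
      show (Bmat n s z * Qs n s (fun j => z (j + s))) r c = _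
      rw [Matrix.mul_apply]
      have : ∀ t : Fin n, Bmat n s z r t * Qs n s (fun j => z (j + s)) t c =
          if t = c then Bmat n s z r t else 0 := by
        intro t
        rw [ih (by omega) _ t c (by omega)]
        by_cases h : t = c
        · rw [if_pos h, if_pos h, mul_one]
        · rw [if_neg h, if_neg h, mul_zero]
      rw [Finset.sum_congr rfl (fun t _ => this t), Finset.sum_ite_eq' Finset.univ c]
      simp only [Finset.mem_univ, if_pos]
      rw [Bmat_apply n s (by omega)]
      rcases eq_or_ne r c with rfl | h
      · rw [if_pos rfl, if_pos rfl]
      · rw [if_neg h, if_neg h, if_neg (by omega)]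

lemma Bmat_row_sub (n s : ℕ) (hs : s < n) (z : ℕ → ℂ) (r c : Fin n)
    (hr : r.val + 1 ≤ s) (hr1 : r.val + 1 < n) :
    Bmat n s z r c - z (r.val+1) * Bmat n s z ⟨r.val+1, hr1⟩ c = if r = c then 1 else 0 := by
  rw [Bmat_apply n s hs, Bmat_apply n s hs]
  rcases eq_or_ne r c with rfl | hrc
  · rw [if_pos rfl, if_pos rfl, if_neg (by simp only [Fin.ext_iff]; omega),
      if_neg (by simp only [Fin.lt_def]; omega), mul_zero, sub_zero]
  · rw [if_neg hrc, if_neg hrc]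
    rcases lt_trichotomy c.val (r.val + 1) with hcr | hcr | hcr
    · rw [if_neg (by simp only [Fin.lt_def]; omega), if_neg (by simp only [Fin.ext_iff]; omega),
        if_neg (by simp only [Fin.lt_def]; omega), mul_zero, sub_zero]
    · rw [if_pos ⟨by simp only [Fin.lt_def]; omega, by omega⟩,
        if_pos (by simp only [Fin.ext_iff]; omega), mul_one]
      rw [show Finset.Icc (r.val+1) c.val = {r.val+1} by
        ext t; simp only [Finset.mem_Icc, Finset.mem_singleton]; omega, Finset.prod_singleton,
        sub_self]
    · by_cases hcs : c.val ≤ s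
      · rw [if_pos ⟨by simp only [Fin.lt_def]; omega, hcs⟩,
          if_neg (by simp only [Fin.ext_iff]; omega),
          if_pos ⟨by simp only [Fin.lt_def]; omega, hcs⟩]
        rw [prod_Icc_bot (by omega) z]
        ring
      · rw [if_neg (by omega), if_neg (by simp only [Fin.ext_iff]; omega), if_neg (by omega),
          mul_zero, sub_zero]

lemma Qs_row_sub (n s : ℕ) (hs : s + 1 ≤ n) (z : ℕ → ℂ) (r c : Fin n)
    (hr : r.val + 1 ≤ s) (hr1 : r.val + 1 < n) :
    Qs n (s+1) z r c - z (r.val+1) * Qs n (s+1) z ⟨r.val+1, hr1⟩ c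
      = Qs n s (fun j => z (j + s)) r c := by
  show (Bmat n s z * Qs n s _) r c - z (r.val+1) * (Bmat n s z * Qs n s _) ⟨r.val+1, hr1⟩ c = _
  rw [Matrix.mul_apply, Matrix.mul_apply, Finset.mul_sum, ← Finset.sum_sub_distrib]
  have : ∀ t : Fin n,
      (Bmat n s z r t * Qs n s (fun j => z (j + s)) t c
        - z (r.val+1) * (Bmat n s z ⟨r.val+1, hr1⟩ t * Qs n s (fun j => z (j + s)) t c))
      = if r = t then Qs n s (fun j => z (j + s)) t c else 0 := by
    intro t
    rw [← mul_assoc, ← sub_mul]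
    have hrt := Bmat_row_sub n s (by omega) z r t hr hr1
    rw [hrt]
    by_cases h : r = t
    · rw [if_pos h, if_pos h, one_mul]
    · rw [if_neg h, if_neg h, zero_mul]
  rw [Finset.sum_congr rfl (fun t _ => this t), Finset.sum_ite_eq Finset.univ r]
  simp only [Finset.mem_univ, if_pos]

lemma Qs_last_col (n s : ℕ) (hs : s + 1 ≤ n) (z : ℕ → ℂ) (r : Fin n) (c : Fin n)
    (hc : c.val = s) :
    Qs n (s+1) z r c = Bmat n s z r c := by
  show (Bmat n s z * Qs n s _) r c = _
  rw [Matrix.mul_apply]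
  have : ∀ t : Fin n, Bmat n s z r t * Qs n s (fun j => z (j + s)) t c =
      if t = c then Bmat n s z r t else 0 := by
    intro t
    rw [Qs_apply_of_ge n s (by omega) _ t c (by omega)]
    by_cases h : t = c
    · rw [if_pos h, if_pos h, mul_one]
    · rw [if_neg h, if_neg h, mul_zero]
  rw [Finset.sum_congr rfl (fun t _ => this t), Finset.sum_ite_eq' Finset.univ c]
  simp only [Finset.mem_univ, if_pos]

lemma minor_eq (n : ℕ) : ∀ (i s k : ℕ) (_ : i < k) (_ : k ≤ s) (_ : s ≤ n) (z : ℕ → ℂ),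
    Matrix.det (Matrix.of fun p q : Fin i =>
      Qs n s z ⟨s - k + p.val, by have := p.isLt; omega⟩
        ⟨s - i + q.val, by have := q.isLt; omega⟩) = zfac s k i z := by
  intro i
  induction i with
  | zero => intro s k _ _ _ z; rw [Matrix.det_fin_zero]; rfl
  | succ i ih =>
      intro s k hik hks hsn z
      obtain ⟨s', rfl⟩ : ∃ s', s = s' + 1 := ⟨s - 1, by omega⟩
      set z' : ℕ → ℂ := fun j => z (j + s') with hz'
      set A : Matrix (Fin (i+1)) (Fin (i+1)) ℂ := Matrix.of fun p q : Fin (i+1) =>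
        Qs n (s'+1) z ⟨s' + 1 - k + p.val, by have := p.isLt; omega⟩
          ⟨s' + 1 - (i+1) + q.val, by have := q.isLt; omega⟩ with hA
      set L : Matrix (Fin (i+1)) (Fin (i+1)) ℂ := Matrix.of fun p q : Fin (i+1) =>
        if p = q then 1 else if q.val = p.val + 1 then -(z (s' + 1 - k + p.val + 1)) else 0
        with hLdef
      set A' : Matrix (Fin (i+1)) (Fin (i+1)) ℂ := Matrix.of fun p q : Fin (i+1) =>
        if p.val < i then
          Qs n s' z' ⟨s' + 1 - k + p.val, by have := p.isLt; omega⟩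
            ⟨s' + 1 - (i+1) + q.val, by have := q.isLt; omega⟩
        else
          Qs n (s'+1) z ⟨s' + 1 - k + p.val, by have := p.isLt; omega⟩
            ⟨s' + 1 - (i+1) + q.val, by have := q.isLt; omega⟩ with hA'
      have hLdet : L.det = 1 := by
        rw [Matrix.det_of_upperTriangular (by
          intro p q hpq
          have hqp : q.val < p.val := hpq
          show (if p = q then _ else _) = 0
          rw [if_neg (by intro h; subst h; exact lt_irrefl _ hqp), if_neg (by omega)])]
        apply Finset.prod_eq_one
        intro p _
        show (if p = p then _ else _) = 1
        rw [if_pos rfl]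
      have hLA : L * A = A' := by
        ext p q
        rw [Matrix.mul_apply]
        have hsplit : ∀ t : Fin (i+1), L p t * A t q =
            (if p = t then A t q else 0) +
            (if t.val = p.val + 1 then -(z (s' + 1 - k + p.val + 1)) * A t q else 0) := by
          intro t
          show (if p = t then (1:ℂ) else if t.val = p.val + 1 then _ else 0) * A t q = _
          by_cases h1 : p = t
          · rw [if_pos h1, if_pos h1, one_mul, if_neg (by subst h1; omega), add_zero]
          · rw [if_neg h1, if_neg h1]
            by_cases h2 : t.val = p.val + 1
            · rw [if_pos h2, if_pos h2, zero_add]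
            · rw [if_neg h2, if_neg h2, zero_mul, zero_add]
        rw [Finset.sum_congr rfl (fun t _ => hsplit t), Finset.sum_add_distrib,
          Finset.sum_ite_eq Finset.univ p (fun t => A t q)]
        simp only [Finset.mem_univ, if_pos]
        by_cases hp : p.val < i
        · have hcoll : ∀ t : Fin (i+1),
              (if t.val = p.val + 1 then -(z (s' + 1 - k + p.val + 1)) * A t q else 0) =
              (if t = (⟨p.val + 1, by omega⟩ : Fin (i+1)) then
                -(z (s' + 1 - k + p.val + 1)) * A (⟨p.val + 1, by omega⟩ : Fin (i+1)) q
                else 0) := by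
            intro t
            by_cases ht : t = (⟨p.val + 1, by omega⟩ : Fin (i+1))
            · subst ht; rw [if_pos rfl, if_pos rfl]
            · rw [if_neg (fun h => ht (Fin.ext h)), if_neg ht]
          rw [Finset.sum_congr rfl (fun t _ => hcoll t),
            Finset.sum_ite_eq' Finset.univ (⟨p.val + 1, by omega⟩ : Fin (i+1))]
          simp only [Finset.mem_univ, if_pos]
          have heq : A p q + -(z (s' + 1 - k + p.val + 1)) *
                A (⟨p.val + 1, by omega⟩ : Fin (i+1)) q
              = A p q - z (s' + 1 - k + p.val + 1) *
                A (⟨p.val + 1, by omega⟩ : Fin (i+1)) q := by ring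
          rw [heq, hA', hA]
          simp only [Matrix.of_apply]
          rw [if_pos hp]
          have hrow2 : (⟨s' + 1 - k + ((⟨p.val + 1, by omega⟩ : Fin (i+1)) : ℕ),
              by have := p.isLt; omega⟩ : Fin n)
              = ⟨(s' + 1 - k + p.val) + 1, by have := p.isLt; omega⟩ := by
            apply Fin.ext
            show s' + 1 - k + ((⟨p.val + 1, by omega⟩ : Fin (i+1)) : ℕ) = s' + 1 - k + p.val + 1
            show s' + 1 - k + (p.val + 1) = s' + 1 - k + p.val + 1
            omega
          rw [hrow2]
          exact Qs_row_sub n s' (by omega) z ⟨s' + 1 - k + p.val, by have := p.isLt; omega⟩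
            ⟨s' + 1 - (i+1) + q.val, by have := q.isLt; omega⟩
            (show s' + 1 - k + p.val + 1 ≤ s' by omega)
            (show s' + 1 - k + p.val + 1 < n by omega)
        · have hzero : ∀ t : Fin (i+1),
              (if t.val = p.val + 1 then -(z (s' + 1 - k + p.val + 1)) * A t q else 0) = 0 := by
            intro t; rw [if_neg (by have := t.isLt; omega)]
          rw [Finset.sum_congr rfl (fun t _ => hzero t), Finset.sum_const_zero, add_zero,
            hA', hA]
          simp only [Matrix.of_apply]
          rw [if_neg hp]
      have hdetA : A.det = A'.det := by rw [← hLA, Matrix.det_mul, hLdet, one_mul]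
      have hlastcol : ∀ p : Fin (i+1), p ≠ Fin.last i → A' p (Fin.last i) = 0 := by
        intro p hp
        have hpi : p.val < i := by
          have h1 := p.isLt
          rcases Nat.lt_or_ge p.val i with h | h
          · exact h
          · exact absurd (Fin.ext (by rw [Fin.val_last]; omega : p.val = (Fin.last i).val)) hp
        rw [hA']
        simp only [Matrix.of_apply]
        rw [if_pos hpi]
        rw [Qs_apply_of_ge n s' (by omega) z' _ _
          (show s' ≤ s' + 1 - (i+1) + ((Fin.last i : Fin (i+1)) : ℕ) by rw [Fin.val_last]; omega)]
        rw [if_neg (by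
          intro h
          have h2 : s' + 1 - k + p.val = s' + 1 - (i+1) + ((Fin.last i : Fin (i+1)) : ℕ) :=
            congrArg Fin.val h
          rw [Fin.val_last] at h2
          omega)]
      have hcorner : A' (Fin.last i) (Fin.last i)
          = ∏ t ∈ Finset.Icc (s' + 1 - k + i + 1) s', z t := by
        rw [hA']
        simp only [Matrix.of_apply, Fin.val_last]
        rw [if_neg (lt_irrefl i)]
        have hcol : (⟨s' + 1 - (i+1) + i, by omega⟩ : Fin n) = ⟨s', by omega⟩ :=
          Fin.ext (show s' + 1 - (i+1) + i = s' by omega)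
        rw [hcol, Qs_last_col n s' (by omega) z _ _ rfl, Bmat_apply n s' (by omega)]
        rw [if_neg (by
          intro h
          have h2 : s' + 1 - k + i = s' := congrArg Fin.val h
          omega)]
        rw [if_pos ⟨show (s' + 1 - k + i : ℕ) < s' from by omega, le_refl s'⟩]
      have hsub : (A'.submatrix (Fin.last i).succAbove (Fin.last i).succAbove)
          = Matrix.of fun p q : Fin i =>
              Qs n s' z' ⟨s' - (k-1) + p.val, by have := p.isLt; omega⟩
                ⟨s' - i + q.val, by have := q.isLt; omega⟩ := by
        ext p q
        simp only [Matrix.submatrix_apply, Fin.succAbove_last, Matrix.of_apply]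
        rw [hA']
        simp only [Matrix.of_apply, Fin.coe_castSucc]
        rw [if_pos p.isLt]
        have h1 : (⟨s' + 1 - k + p.val, by have := p.isLt; omega⟩ : Fin n)
            = ⟨s' - (k-1) + p.val, by have := p.isLt; omega⟩ := Fin.ext (by
          show s' + 1 - k + p.val = s' - (k-1) + p.val
          omega)
        have h2 : (⟨s' + 1 - (i+1) + p.val, by have := p.isLt; omega⟩ : Fin n)
            = (⟨s' + 1 - (i+1) + p.val, by have := p.isLt; omega⟩ : Fin n) := rfl
        have h3 : (⟨s' + 1 - (i+1) + q.val, by have := q.isLt; omega⟩ : Fin n)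
            = ⟨s' - i + q.val, by have := q.isLt; omega⟩ := Fin.ext (by
          show s' + 1 - (i+1) + q.val = s' - i + q.val
          omega)
        rw [h1, h3]
      have hdet' : A'.det = (∏ t ∈ Finset.Icc (s' + 1 - k + i + 1) s', z t) *
          zfac s' (k-1) i z' := by
        rw [Matrix.det_succ_column A' (Fin.last i)]
        rw [Finset.sum_eq_single (Fin.last i)]
        · rw [hcorner, hsub, ih s' (k-1) (by omega) (by omega) (by omega) z']
          have hpow : (-1 : ℂ) ^ (((Fin.last i) : ℕ) + ((Fin.last i) : ℕ)) = 1 := by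
            rw [← two_mul, pow_mul]
            norm_num
          rw [hpow, one_mul]
        · intro p _ hp
          rw [hlastcol p hp, mul_zero, zero_mul]
        · intro h
          exact absurd (Finset.mem_univ _) h
      show A.det = zfac (s'+1) k (i+1) z
      rw [hdetA, hdet']
      show _ = (∏ t ∈ Finset.Icc (s'+1-k+i+1) (s'+1-1), z t) *
        zfac (s'+1-1) (k-1) i (fun j => z (j + (s'+1-1)))
      rw [Nat.add_sub_cancel]

def eprodZ (n : ℕ) (z : ℕ → ℂ) (l : List ℕ) : Matrix (Fin n) (Fin n) ℂ :=
  (l.zipIdx.map (fun q => ejmat n q.1 (z (q.2 + 1)))).prod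

lemma enumFrom_shift {α M : Type*} :
    ∀ (l : List α) (k : ℕ) (g : α × ℕ → M),
      (l.zipIdx k).map g = l.zipIdx.map (fun q => g (q.1, q.2 + k)) := by
  intro l
  induction l with
  | nil => intro k g; rfl
  | cons a t iht =>
      intro k g
      rw [List.zipIdx_cons, List.map_cons, List.zipIdx_cons, List.map_cons]
      show g (a, k) :: _ = g (a, 0 + k) :: _
      rw [Nat.zero_add]
      congr 1
      rw [iht (k+1) g, iht 1 (fun q => g (q.1, q.2 + k))]
      apply List.map_congr_left
      intro q _
      show g (q.1, q.2 + (k+1)) = g (q.1, q.2 + 1 + k)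
      congr 2
      omega

lemma eprodZ_cons (n : ℕ) (z : ℕ → ℂ) (a : ℕ) (l : List ℕ) :
    eprodZ n z (a :: l) = ejmat n a (z 1) * eprodZ n (fun j => z (j + 1)) l := by
  unfold eprodZ
  rw [List.zipIdx_cons, List.map_cons, List.prod_cons]
  congr 1
  rw [Nat.zero_add, enumFrom_shift l 1 (fun q => ejmat n q.1 (z (q.2 + 1)))]

lemma eprodZ_append (n : ℕ) : ∀ (a b : List ℕ) (z : ℕ → ℂ),
    eprodZ n z (a ++ b) = eprodZ n z a * eprodZ n (fun j => z (j + a.length)) b := by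
  intro a
  induction a with
  | nil =>
      intro b z
      show eprodZ n z b = eprodZ n z [] * eprodZ n (fun j => z (j + 0)) b
      have h1 : eprodZ n z [] = 1 := rfl
      have h2 : (fun j => z (j + 0)) = z := by funext j; rw [Nat.add_zero]
      rw [h1, h2, one_mul]
  | cons c t iht =>
      intro b z
      show eprodZ n z (c :: (t ++ b)) = _
      rw [eprodZ_cons, iht b (fun j => z (j + 1)), eprodZ_cons, mul_assoc]
      have h3 : ∀ j : ℕ, j + t.length + 1 = j + (c :: t).length := by
        intro j; rw [List.length_cons]; omega
      have h4 : (fun j => z (j + t.length + 1)) = (fun j => z (j + (c :: t).length)) :=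
        funext (fun j => by rw [h3 j])
      rw [h4]

lemma eprodZ_block (n : ℕ) : ∀ (s : ℕ) (z : ℕ → ℂ),
    eprodZ n z ((List.range s).map (· + 1)) = Bmat n s z := by
  intro s
  induction s with
  | zero => intro z; rfl
  | succ s ih =>
      intro z
      rw [List.range_succ, List.map_append, eprodZ_append, ih z, Bmat_succ]
      congr 1
      show eprodZ n (fun j => z (j + ((List.range s).map (· + 1)).length)) [s + 1] = _
      rw [List.length_map, List.length_range]
      show ejmat n (s+1) (z (0 + 1 + s)) * 1 = ejmat n (s+1) (z (s+1))
      rw [mul_one, show 0 + 1 + s = s + 1 from by omega]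

lemma word_succ (s : ℕ) : word (s + 1) = (List.range s).map (· + 1) ++ word s := by
  cases s with
  | zero => rfl
  | succ t =>
      show ((List.range (t+1)).reverse).flatMap _ = _
      rw [show (List.range (t+1)).reverse = t :: (List.range t).reverse from by
        rw [List.range_succ, List.reverse_append]; rfl]
      rw [List.flatMap_cons]
      rfl

lemma eprodZ_word (n : ℕ) : ∀ (s : ℕ) (z : ℕ → ℂ), eprodZ n z (word s) = Qs n s z := by
  intro s
  induction s with
  | zero => intro z; rfl
  | succ s ih =>
      intro z
      rw [word_succ, eprodZ_append, eprodZ_block]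
      show Bmat n s z * eprodZ n (fun j => z (j + ((List.range s).map (· + 1)).length)) (word s)
        = Qs n (s+1) z
      rw [List.length_map, List.length_range, ih]
      rfl

lemma az0_eq (n : ℕ) (x z : ℕ → ℂ) :
    az0 n x z = Matrix.diagonal (fun p : Fin n => x (p.val + 1)) * Qs n n z := by
  unfold az0
  rw [show ((word n).zipIdx.map (fun q => ejmat n q.1 (z (q.2 + 1)))).prod = eprodZ n z (word n)
    from rfl, eprodZ_word]

lemma cornerMinor_az0 (n k i : ℕ) (x z : ℕ → ℂ) (hi : 1 ≤ i) (hik : i < k) (hkn : k ≤ n) :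
    cornerMinor n k i (az0 n x z)
      = (∏ p : Fin i, x (n - k + p.val + 1)) * zfac n k i z := by
  unfold cornerMinor
  rw [dif_pos ⟨hi, by omega, hkn⟩]
  have hentry : (Matrix.of fun p q : Fin i =>
      (az0 n x z) ⟨n - k + p.val, by have := p.isLt; omega⟩
        ⟨n - i + q.val, by have := q.isLt; omega⟩)
      = Matrix.of (fun p q : Fin i => (fun p : Fin i => x (n - k + p.val + 1)) p *
          (Matrix.of fun p q : Fin i =>
            Qs n n z ⟨n - k + p.val, by have := p.isLt; omega⟩
              ⟨n - i + q.val, by have := q.isLt; omega⟩) p q) := by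
    ext p q
    simp only [Matrix.of_apply]
    rw [az0_eq, Matrix.diagonal_mul]
  rw [hentry, Matrix.det_mul_column (fun p : Fin i => x (n - k + p.val + 1)),
    minor_eq n i n k hik hkn (le_refl n) z]

lemma zfac_real : ∀ (i s k : ℕ) (z : ℕ → ℝ),
    zfac s k i (fun j => ((z j : ℝ) : ℂ)) = ((zfacR s k i z : ℝ) : ℂ) := by
  intro i
  induction i with
  | zero => intro s k z; simp [zfac, zfacR]
  | succ i ih =>
      intro s k z
      show (∏ t ∈ Finset.Icc (s-k+i+1) (s-1), ((z t : ℝ) : ℂ)) *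
          zfac (s-1) (k-1) i (fun j => ((z (j + (s-1)) : ℝ) : ℂ))
        = ((((∏ t ∈ Finset.Icc (s-k+i+1) (s-1), z t) *
            zfacR (s-1) (k-1) i (fun j => z (j + (s-1)))) : ℝ) : ℂ)
      rw [ih (s-1) (k-1) (fun j => z (j + (s-1)))]
      rw [← Complex.ofReal_prod, ← Complex.ofReal_mul]

lemma rsign_mul (a b : ℝ) : Real.sign (a * b) = Real.sign a * Real.sign b := by
  rcases lt_trichotomy a 0 with ha | ha | ha
  · rcases lt_trichotomy b 0 with hb | hb | hb
    · rw [Real.sign_of_pos (mul_pos_of_neg_of_neg ha hb), Real.sign_of_neg ha,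
        Real.sign_of_neg hb]; norm_num
    · rw [hb, mul_zero, Real.sign_zero, mul_zero]
    · rw [Real.sign_of_neg (mul_neg_of_neg_of_pos ha hb), Real.sign_of_neg ha,
        Real.sign_of_pos hb]; norm_num
  · rw [ha, zero_mul, Real.sign_zero, zero_mul]
  · rcases lt_trichotomy b 0 with hb | hb | hb
    · rw [Real.sign_of_neg (mul_neg_of_pos_of_neg ha hb), Real.sign_of_pos ha,
        Real.sign_of_neg hb]; norm_num
    · rw [hb, mul_zero, Real.sign_zero, mul_zero]
    · rw [Real.sign_of_pos (mul_pos ha hb), Real.sign_of_pos ha, Real.sign_of_pos hb]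
      norm_num

lemma rsign_prod (S : Finset ℕ) (f : ℕ → ℝ) :
    Real.sign (∏ t ∈ S, f t) = ∏ t ∈ S, Real.sign (f t) := by
  classical
  induction S using Finset.induction with
  | empty => simp [Real.sign_one]
  | insert a T h ih => rw [Finset.prod_insert h, Finset.prod_insert h, rsign_mul, ih]

lemma rsign_ne_zero {a : ℝ} (h : a ≠ 0) : Real.sign a ≠ 0 := fun hh =>
  h (Real.sign_eq_zero_iff.mp hh)

lemma half_bound (s : ℕ) (hs : 2 ≤ s) : s - 1 ≤ s * (s - 1) / 2 := by
  have h1 : 2 * (s - 1) ≤ s * (s - 1) := Nat.mul_le_mul_right _ hs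
  have h2 : 2 * (s - 1) / 2 ≤ s * (s - 1) / 2 := Nat.div_le_div_right h1
  rw [Nat.mul_div_cancel_left _ (by norm_num)] at h2
  exact h2

lemma half_shift (s : ℕ) (hs : 1 ≤ s) : (s - 1) * ((s - 1) - 1) / 2 + (s - 1) = s * (s - 1) / 2 := by
  obtain ⟨u, rfl⟩ : ∃ u, s = u + 1 := ⟨s - 1, by omega⟩
  have h := Nat.triangle_succ u
  rw [Nat.add_sub_cancel] at h ⊢
  omega

lemma zfacR_ne_zero : ∀ (i s k : ℕ) (z : ℕ → ℝ),
    (∀ j, 1 ≤ j → j ≤ s * (s - 1) / 2 → z j ≠ 0) → i ≤ k → k ≤ s → zfacR s k i z ≠ 0 := by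
  intro i
  induction i with
  | zero => intro s k z _ _ _; exact one_ne_zero
  | succ i ih =>
      intro s k z hz hik hks
      show (∏ t ∈ Finset.Icc (s-k+i+1) (s-1), z t) * zfacR (s-1) (k-1) i _ ≠ 0
      apply mul_ne_zero
      · rw [Finset.prod_ne_zero_iff]
        intro t ht
        rw [Finset.mem_Icc] at ht
        have hs2 : 2 ≤ s := by omega
        have hb := half_bound s hs2
        exact hz t (by omega) (by omega)
      · apply ih (s-1) (k-1) _ _ (by omega) (by omega)
        intro j hj1 hj2
        have hs1 : 1 ≤ s := by omega
        have hb := half_shift s hs1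
        apply hz (j + (s-1)) (by omega) (by omega)

lemma zfacR_sign_eq : ∀ (i s k : ℕ) (z z' : ℕ → ℝ),
    (∀ j, 1 ≤ j → j ≤ s * (s - 1) / 2 → Real.sign (z j) = Real.sign (z' j)) →
    i ≤ k → k ≤ s →
    Real.sign (zfacR s k i z) = Real.sign (zfacR s k i z') := by
  intro i
  induction i with
  | zero => intro s k z z' _ _ _; rfl
  | succ i ih =>
      intro s k z z' hz hik hks
      show Real.sign ((∏ t ∈ Finset.Icc (s-k+i+1) (s-1), z t) * zfacR (s-1) (k-1) i _)
        = Real.sign ((∏ t ∈ Finset.Icc (s-k+i+1) (s-1), z' t) * zfacR (s-1) (k-1) i _)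
      rw [rsign_mul, rsign_mul, rsign_prod, rsign_prod]
      have hs2 : 2 ≤ s ∨ Finset.Icc (s-k+i+1) (s-1) = ∅ := by
        rcases Nat.lt_or_ge s 2 with h | h
        · right; apply Finset.Icc_eq_empty; omega
        · left; exact h
      congr 1
      · apply Finset.prod_congr rfl
        intro t ht
        rw [Finset.mem_Icc] at ht
        have hs2 : 2 ≤ s := by omega
        have hb := half_bound s hs2
        exact hz t (by omega) (by omega)
      · apply ih (s-1) (k-1) _ _ _ (by omega) (by omega)
        intro j hj1 hj2
        have hs1 : 1 ≤ s := by omega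
        have hb := half_shift s hs1
        exact hz (j + (s-1)) (by omega) (by omega)

lemma zfacR_congr : ∀ (i s k : ℕ) (w1 w2 : ℕ → ℝ), (∀ j, 1 ≤ j → w1 j = w2 j) →
    zfacR s k i w1 = zfacR s k i w2 := by
  intro i
  induction i with
  | zero => intro s k w1 w2 _; rfl
  | succ i ih =>
      intro s k w1 w2 hw
      show (∏ t ∈ Finset.Icc (s-k+i+1) (s-1), w1 t) * zfacR (s-1) (k-1) i _
        = (∏ t ∈ Finset.Icc (s-k+i+1) (s-1), w2 t) * zfacR (s-1) (k-1) i _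
      congr 1
      · apply Finset.prod_congr rfl
        intro t ht
        rw [Finset.mem_Icc] at ht
        exact hw t (by omega)
      · exact ih (s-1) (k-1) _ _ (fun j hj => hw (j + (s-1)) (by omega))

lemma zfacR_inj : ∀ (s : ℕ) (z z' : ℕ → ℝ),
    (∀ j, 1 ≤ j → j ≤ s * (s - 1) / 2 → z j ≠ 0) →
    (∀ j, 1 ≤ j → j ≤ s * (s - 1) / 2 → z' j ≠ 0) →
    (∀ i k, 1 ≤ i → i < k → k ≤ s → Real.sign (zfacR s k i z) = Real.sign (zfacR s k i z')) →
    ∀ j, 1 ≤ j → j ≤ s * (s - 1) / 2 → Real.sign (z j) = Real.sign (z' j) := by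
  intro s
  induction s with
  | zero => intro z z' _ _ _ j hj1 hj2; omega
  | succ s ihs =>
      intro z z' hz hz' hsig
      have hhalf : s * (s - 1) / 2 + s = (s + 1) * s / 2 := by
        have h := Nat.triangle_succ s
        rw [Nat.add_sub_cancel] at h
        omega
      have hrange : ∀ t, 1 ≤ t → t ≤ s → t ≤ (s + 1) * ((s + 1) - 1) / 2 := by
        intro t ht1 ht2
        have hb := half_bound (s + 1) (by omega)
        omega
      have hseg : ∀ j, 1 ≤ j → j ≤ s + 1 →
          Real.sign (∏ t ∈ Finset.Icc j s, z t) = Real.sign (∏ t ∈ Finset.Icc j s, z' t) := by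
        intro j hj1 hj2
        rcases Nat.lt_or_ge s j with h | h
        · rw [Finset.Icc_eq_empty (by omega), Finset.prod_empty, Finset.prod_empty]
        · have hk1 : 1 < s + 2 - j := by omega
          have hk2 : s + 2 - j ≤ s + 1 := by omega
          have hh := hsig 1 (s + 2 - j) le_rfl hk1 hk2
          have he : ∀ w : ℕ → ℝ, zfacR (s+1) (s+2-j) 1 w = ∏ t ∈ Finset.Icc j s, w t := by
            intro w
            show (∏ t ∈ Finset.Icc ((s+1)-(s+2-j)+0+1) ((s+1)-1), w t) *
              zfacR ((s+1)-1) ((s+2-j)-1) 0 _ = _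
            rw [show (s+1)-(s+2-j)+0+1 = j from by omega, show (s+1)-1 = s from rfl]
            show _ * 1 = _
            rw [mul_one]
          rw [he z, he z'] at hh
          exact hh
      have hblock : ∀ j, 1 ≤ j → j ≤ s → Real.sign (z j) = Real.sign (z' j) := by
        intro j hj1 hj2
        have h1 := hseg j hj1 (by omega)
        have h2 := hseg (j+1) (by omega) (by omega)
        rw [prod_Icc_bot (by omega : j ≤ s) z, prod_Icc_bot (by omega : j ≤ s) z',
          rsign_mul, rsign_mul, h2] at h1
        have hPne : (∏ t ∈ Finset.Icc (j+1) s, z' t) ≠ 0 := by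
          rw [Finset.prod_ne_zero_iff]
          intro t ht
          rw [Finset.mem_Icc] at ht
          exact hz' t (by omega) (hrange t (by omega) (by omega))
        exact mul_right_cancel₀ (rsign_ne_zero hPne) h1
      have hdeep : ∀ i k, 1 ≤ i → i < k → k ≤ s →
          Real.sign (zfacR s k i (fun j => z (j + s)))
            = Real.sign (zfacR s k i (fun j => z' (j + s))) := by
        intro i k hi hik hks
        have hh := hsig (i+1) (k+1) (by omega) (by omega) (by omega)
        have he : ∀ w : ℕ → ℝ, zfacR (s+1) (k+1) (i+1) w
            = (∏ t ∈ Finset.Icc ((s+1)-(k+1)+i+1) s, w t) *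
              zfacR s k i (fun j => w (j + s)) := fun w => rfl
        rw [he z, he z', rsign_mul, rsign_mul] at hh
        have hlow1 : 1 ≤ (s+1)-(k+1)+i+1 := by omega
        have hlow2 : (s+1)-(k+1)+i+1 ≤ s + 1 := by omega
        have h2 := hseg ((s+1)-(k+1)+i+1) hlow1 hlow2
        rw [h2] at hh
        have hPne : (∏ t ∈ Finset.Icc ((s+1)-(k+1)+i+1) s, z' t) ≠ 0 := by
          rw [Finset.prod_ne_zero_iff]
          intro t ht
          rw [Finset.mem_Icc] at ht
          exact hz' t (by omega) (hrange t (by omega) (by omega))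
        exact mul_left_cancel₀ (rsign_ne_zero hPne) hh
      have hshift : ∀ j, 1 ≤ j → j ≤ s * (s - 1) / 2 → (1 ≤ j + s ∧ j + s ≤ (s+1) * s / 2) := by
        intro j hj1 hj2
        omega
      have hrec := ihs (fun j => z (j + s)) (fun j => z' (j + s))
        (fun j hj1 hj2 => hz (j + s) (hshift j hj1 hj2).1 (hshift j hj1 hj2).2)
        (fun j hj1 hj2 => hz' (j + s) (hshift j hj1 hj2).1 (hshift j hj1 hj2).2)
        hdeep
      intro j hj1 hj2
      rcases Nat.lt_or_ge s j with h | h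
      · have hsame : (s+1) * ((s+1) - 1) / 2 = (s+1) * s / 2 := by rw [Nat.add_sub_cancel]
        have hj2' : j - s ≤ s * (s - 1) / 2 := by omega
        have := hrec (j - s) (by omega) hj2'
        have h5 : j - s + s = j := by omega
        simpa [h5] using this
      · exact hblock j hj1 h

lemma pm_mul {a b : ℝ} (ha : a = 1 ∨ a = -1) (hb : b = 1 ∨ b = -1) :
    a * b = 1 ∨ a * b = -1 := by
  rcases ha with rfl | rfl <;> rcases hb with rfl | rfl <;> norm_num

lemma pm_prod (S : Finset ℕ) (f : ℕ → ℝ) (h : ∀ t ∈ S, f t = 1 ∨ f t = -1) :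
    (∏ t ∈ S, f t) = 1 ∨ (∏ t ∈ S, f t) = -1 := by
  classical
  induction S using Finset.induction with
  | empty => left; exact Finset.prod_empty
  | @insert a T ha ih =>
      rw [Finset.prod_insert ha]
      exact pm_mul (h a (Finset.mem_insert_self a T))
        (ih (fun t ht => h t (Finset.mem_insert_of_mem ht)))

lemma sign_pm {a : ℝ} (h : a = 1 ∨ a = -1) : Real.sign a = a := by
  rcases h with rfl | rfl
  · exact Real.sign_one
  · rw [Real.sign_of_neg (by norm_num)]

lemma pm_sq {a : ℝ} (h : a = 1 ∨ a = -1) : a * a = 1 := by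
  rcases h with rfl | rfl <;> norm_num

lemma zfacR_surj : ∀ (s : ℕ) (σ : ℕ → ℕ → ℝ),
    (∀ i k, 1 ≤ i → i < k → k ≤ s → σ k i = 1 ∨ σ k i = -1) →
    ∃ z : ℕ → ℝ, (∀ j, z j = 1 ∨ z j = -1) ∧
      (∀ i k, 1 ≤ i → i < k → k ≤ s → Real.sign (zfacR s k i z) = σ k i) := by
  intro s
  induction s with
  | zero =>
      intro σ _
      exact ⟨fun _ => 1, fun _ => Or.inl rfl, fun i k hi hik hks => by omega⟩
  | succ s ihs =>
      intro σ hσ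
      by_cases hs0 : s = 0
      · subst hs0
        exact ⟨fun _ => 1, fun _ => Or.inl rfl, fun i k hi hik hks => by omega⟩
      have hs1 : 1 ≤ s := by omega
      set tt : ℕ → ℝ := fun j =>
        if j = 0 then 1 else if j = s then σ 2 1
        else if j < s then σ (s+2-j) 1 * σ (s+1-j) 1 else 1 with htt
      have htpm : ∀ j, tt j = 1 ∨ tt j = -1 := by
        intro j
        simp only [htt]
        by_cases h0 : j = 0
        · rw [if_pos h0]; left; rfl
        rw [if_neg h0]
        by_cases h1 : j = s
        · rw [if_pos h1]; exact hσ 1 2 le_rfl (by omega) (by omega)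
        rw [if_neg h1]
        by_cases h2 : j < s
        · rw [if_pos h2]
          exact pm_mul (hσ 1 (s+2-j) le_rfl (by omega) (by omega))
            (hσ 1 (s+1-j) le_rfl (by omega) (by omega))
        · rw [if_neg h2]; left; rfl
      have hCt : ∀ d, d ≤ s - 1 → (∏ u ∈ Finset.Icc (s - d) s, tt u) = σ (d + 2) 1 := by
        intro d
        induction d with
        | zero =>
            intro _
            rw [Nat.sub_zero, Finset.Icc_self, Finset.prod_singleton]
            show tt s = σ (0 + 2) 1
            have h1 : tt s = σ 2 1 := by
              simp only [htt]
              rw [if_neg hs0, if_pos trivial]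
            rw [h1]
        | succ d ihd =>
            intro hd
            rw [prod_Icc_bot (by omega : s - (d+1) ≤ s) tt,
              show s - (d+1) + 1 = s - d from by omega, ihd (by omega)]
            have hj0 : ¬ (s - (d+1) = 0) := by omega
            have hjs : ¬ (s - (d+1) = s) := by omega
            have hjlt : s - (d+1) < s := by omega
            simp only [htt]
            rw [if_neg hj0, if_neg hjs, if_pos hjlt,
              show s + 2 - (s - (d+1)) = d + 3 from by omega,
              show s + 1 - (s - (d+1)) = d + 2 from by omega]
            rw [mul_assoc, pm_sq (hσ 1 (d+2) le_rfl (by omega) (by omega)), mul_one]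
      have hCt' : ∀ j, 1 ≤ j → j ≤ s → (∏ u ∈ Finset.Icc j s, tt u) = σ (s + 2 - j) 1 := by
        intro j h1 h2
        have h3 := hCt (s - j) (by omega)
        rw [show s - (s - j) = j from by omega] at h3
        rw [h3, show s - j + 2 = s + 2 - j from by omega]
      set σ' : ℕ → ℕ → ℝ := fun K I =>
        σ (K+1) (I+1) * ∏ u ∈ Finset.Icc ((s+1)-(K+1)+I+1) s, tt u with hσ'
      have hσ'pm : ∀ i k, 1 ≤ i → i < k → k ≤ s → σ' k i = 1 ∨ σ' k i = -1 := by
        intro i k hi hik hks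
        simp only [hσ']
        exact pm_mul (hσ (i+1) (k+1) (by omega) (by omega) (by omega))
          (pm_prod _ _ (fun t _ => htpm t))
      obtain ⟨z'', hz''pm, hz''sig⟩ := ihs σ' hσ'pm
      set zz : ℕ → ℝ := fun j => if j ≤ s then tt j else z'' (j - s) with hzz
      have hzzpm : ∀ j, zz j = 1 ∨ zz j = -1 := by
        intro j
        simp only [hzz]
        by_cases h : j ≤ s
        · rw [if_pos h]; exact htpm j
        · rw [if_neg h]; exact hz''pm (j - s)
      refine ⟨zz, hzzpm, ?_⟩
      intro i k hi hik hks
      obtain ⟨i', rfl⟩ : ∃ i', i = i' + 1 := ⟨i - 1, by omega⟩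
      have he : zfacR (s+1) k (i'+1) zz
          = (∏ t ∈ Finset.Icc ((s+1)-k+i'+1) s, zz t) *
            zfacR s (k-1) i' (fun j => zz (j + s)) := rfl
      have hsegzz : (∏ t ∈ Finset.Icc ((s+1)-k+i'+1) s, zz t)
          = ∏ t ∈ Finset.Icc ((s+1)-k+i'+1) s, tt t := by
        apply Finset.prod_congr rfl
        intro t ht
        rw [Finset.mem_Icc] at ht
        simp only [hzz]
        rw [if_pos ht.2]
      have hshifteq : zfacR s (k-1) i' (fun j => zz (j + s)) = zfacR s (k-1) i' z'' := by
        apply zfacR_congr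
        intro j hj
        simp only [hzz]
        rw [if_neg (by omega), show j + s - s = j from by omega]
      have hC := pm_prod (Finset.Icc ((s+1)-k+i'+1) s) tt (fun t _ => htpm t)
      rw [he, hsegzz, hshifteq]
      cases i' with
      | zero =>
          rw [show zfacR s (k-1) 0 z'' = 1 from rfl, mul_one]
          rw [hCt' ((s+1)-k+0+1) (by omega) (by omega),
            show s + 2 - ((s+1)-k+0+1) = k from by omega]
          exact sign_pm (hσ 1 k le_rfl (by omega) (by omega))
      | succ i'' =>
          have hsig2 := hz''sig (i''+1) (k-1) (by omega) (by omega) (by omega)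
          rw [rsign_mul, hsig2, sign_pm hC]
          simp only [hσ']
          rw [show (k-1)+1 = k from by omega]
          rw [mul_comm (σ k (i''+1+1)) _, ← mul_assoc, pm_sq hC, one_mul]

end S18

open S18 in
/-- For `x ∈ (0,∞)^n` and `z ∈ (ℝ∖{0})^m`, all corner minors
`Δ_i^{(k)}(az_0(x,z))`, `1 ≤ i < k ≤ n`, are nonzero reals; their signs depend only on
the signs of the `z_j`, the induced map on sign patterns is injective and surjective
(hence a bijection `{±1}^m → {±1}^m`), so `az_0` matches the `2^m` sign patterns of `z`
with the `2^m` chambers of real matrices in `AN` cut out by `Δ_i^{(k)} = 0`. -/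
theorem statement_18 (n m : ℕ) (hn : 2 ≤ n) (hm : m = n * (n - 1) / 2) :
    -- (1) the corner minors are nonzero real numbers
    (∀ x z : ℕ → ℝ,
      (∀ j : ℕ, 1 ≤ j → j ≤ n → 0 < x j) → (∀ j : ℕ, 1 ≤ j → j ≤ m → z j ≠ 0) →
      ∀ i k : ℕ, 1 ≤ i → i < k → k ≤ n →
        (cornerMinor n k i (az0R n x z)).im = 0 ∧ cornerMinor n k i (az0R n x z) ≠ 0) ∧
    -- (2) the signs of the corner minors depend only on the signs of the z_j
    (∀ x x' z z' : ℕ → ℝ,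
      (∀ j : ℕ, 1 ≤ j → j ≤ n → 0 < x j) → (∀ j : ℕ, 1 ≤ j → j ≤ n → 0 < x' j) →
      (∀ j : ℕ, 1 ≤ j → j ≤ m → z j ≠ 0) → (∀ j : ℕ, 1 ≤ j → j ≤ m → z' j ≠ 0) →
      (∀ j : ℕ, 1 ≤ j → j ≤ m → Real.sign (z j) = Real.sign (z' j)) →
      ∀ i k : ℕ, 1 ≤ i → i < k → k ≤ n →
        Real.sign (cornerMinor n k i (az0R n x z)).re =
          Real.sign (cornerMinor n k i (az0R n x' z')).re) ∧
    -- (3) the induced map on sign patterns is injective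
    (∀ x x' z z' : ℕ → ℝ,
      (∀ j : ℕ, 1 ≤ j → j ≤ n → 0 < x j) → (∀ j : ℕ, 1 ≤ j → j ≤ n → 0 < x' j) →
      (∀ j : ℕ, 1 ≤ j → j ≤ m → z j ≠ 0) → (∀ j : ℕ, 1 ≤ j → j ≤ m → z' j ≠ 0) →
      (∀ i k : ℕ, 1 ≤ i → i < k → k ≤ n →
        Real.sign (cornerMinor n k i (az0R n x z)).re =
          Real.sign (cornerMinor n k i (az0R n x' z')).re) →
      ∀ j : ℕ, 1 ≤ j → j ≤ m → Real.sign (z j) = Real.sign (z' j)) ∧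
    -- (4) the induced map on sign patterns is surjective
    (∀ s : ℕ → ℕ → ℝ,
      (∀ i k : ℕ, 1 ≤ i → i < k → k ≤ n → s k i = 1 ∨ s k i = -1) →
      ∃ x z : ℕ → ℝ,
        (∀ j : ℕ, 1 ≤ j → j ≤ n → 0 < x j) ∧ (∀ j : ℕ, 1 ≤ j → j ≤ m → z j ≠ 0) ∧
        ∀ i k : ℕ, 1 ≤ i → i < k → k ≤ n →
          Real.sign (cornerMinor n k i (az0R n x z)).re = s k i) := by
  have key : ∀ (x z : ℕ → ℝ) (i k : ℕ), 1 ≤ i → i < k → k ≤ n →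
      cornerMinor n k i (az0R n x z)
        = (((∏ p : Fin i, x (n - k + p.val + 1)) * zfacR n k i z : ℝ) : ℂ) := by
    intro x z i k hi hik hkn
    rw [show az0R n x z = az0 n (fun j => ((x j : ℝ) : ℂ)) (fun j => ((z j : ℝ) : ℂ)) from rfl]
    rw [cornerMinor_az0 n k i _ _ hi hik hkn, zfac_real]
    rw [Complex.ofReal_mul, Complex.ofReal_prod]
  have xpos : ∀ (x : ℕ → ℝ), (∀ j, 1 ≤ j → j ≤ n → 0 < x j) → ∀ i k : ℕ, 1 ≤ i → i < k →
      k ≤ n → 0 < ∏ p : Fin i, x (n - k + p.val + 1) := by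
    intro x hx i k hi hik hkn
    apply Finset.prod_pos
    intro p _
    exact hx _ (by omega) (by have := p.isLt; omega)
  refine ⟨?_, ?_, ?_, ?_⟩
  · intro x z hx hz i k hi hik hkn
    rw [key x z i k hi hik hkn]
    refine ⟨Complex.ofReal_im _, ?_⟩
    rw [ne_eq, Complex.ofReal_eq_zero]
    apply mul_ne_zero (ne_of_gt (xpos x hx i k hi hik hkn))
    apply zfacR_ne_zero i n k z _ (by omega) hkn
    intro j hj1 hj2
    exact hz j hj1 (by omega)
  · intro x x' z z' hx hx' hz hz' hsgn i k hi hik hkn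
    rw [key x z i k hi hik hkn, key x' z' i k hi hik hkn, Complex.ofReal_re,
      Complex.ofReal_re, rsign_mul, rsign_mul,
      Real.sign_of_pos (xpos x hx i k hi hik hkn),
      Real.sign_of_pos (xpos x' hx' i k hi hik hkn), one_mul, one_mul]
    apply zfacR_sign_eq i n k z z' _ (by omega) hkn
    intro j hj1 hj2
    exact hsgn j hj1 (by omega)
  · intro x x' z z' hx hx' hz hz' hsig
    have hinj := zfacR_inj n z z'
      (fun j h1 h2 => hz j h1 (by omega)) (fun j h1 h2 => hz' j h1 (by omega)) ?_
    · intro j hj1 hj2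
      exact hinj j hj1 (by omega)
    · intro i k hi hik hkn
      have h := hsig i k hi hik hkn
      rw [key x z i k hi hik hkn, key x' z' i k hi hik hkn, Complex.ofReal_re,
        Complex.ofReal_re, rsign_mul, rsign_mul,
        Real.sign_of_pos (xpos x hx i k hi hik hkn),
        Real.sign_of_pos (xpos x' hx' i k hi hik hkn), one_mul, one_mul] at h
      exact h
  · intro s hs
    obtain ⟨z, hzpm, hzsig⟩ := zfacR_surj n s hs
    refine ⟨fun _ => 1, z, fun j _ _ => one_pos, ?_, ?_⟩
    · intro j _ _
      rcases hzpm j with h | h <;> rw [h] <;> norm_num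
    · intro i k hi hik hkn
      rw [key (fun _ => 1) z i k hi hik hkn, Complex.ofReal_re, rsign_mul,
        Finset.prod_const_one, Real.sign_one, one_mul]
      exact hzsig i k hi hik hkn


end
end

section
/- Let x, y ∈ ℝ, z ∈ ℂ, θ ∈ ℝ with z = |z|·e^{√−1·θ}, t > 0, and set r := √(y² + |z|²). Then e^{t(x+r)} + e^{t(x−r)} − e^{t(x+y)} − e^{t(x−y)} ≥ 0, and the 2×2 upper triangular matrix b with diagonal entries e^{t(x+y)/2}, e^{t(x−y)/2} and (1,2)-entry e^{√−1·θ}·√(e^{t(x+r)} + e^{t(x−r)} − e^{t(x+y)} − e^{t(x−y)}) satisfies: the eigenvalues of b b* are e^{t(x+r)} and e^{t(x−r)}, and the (2,2) entry of b b* equals e^{t(x−y)}. (Thus b = gw_t(A) satisfies λ_i^{(k)}(b b*) = exp(t·λ_i^{(k)}(A)) for the 2×2 Hermitian matrix A with diagonal entries x+y, x−y and off-diagonal entries z, z̄, whose Gelfand–Zeitlin values are λ_1^{(2)}(A) = x+r, λ_2^{(2)}(A) = x−r, λ_1^{(1)}(A) = x−y.) -/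
open Matrix Finset Filter

noncomputable section

section AuxLemmas

lemma sum_eig_eq_trace {m : Type*} [Fintype m] [DecidableEq m] {A : Matrix m m ℂ}
    (hA : A.IsHermitian) : ∑ i, (hA.eigenvalues i : ℂ) = A.trace := by
  exact hA.trace_eq_sum_eigenvalues.symm

lemma my_sortedEig_two {B : Matrix (Fin 2) (Fin 2) ℂ} (hB : B.IsHermitian) {a c : ℝ}
    (hac : c ≤ a) (hsum : hB.eigenvalues 0 + hB.eigenvalues 1 = a + c)
    (hprod : hB.eigenvalues 0 * hB.eigenvalues 1 = a * c) :
    sortedEig hB 0 = a ∧ sortedEig hB 1 = c := by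
  have hrev0 : ((0 : Fin 2)).rev = 1 := by decide
  have hrev1 : ((1 : Fin 2)).rev = 0 := by decide
  have hmono : hB.eigenvalues (Tuple.sort hB.eigenvalues 0)
      ≤ hB.eigenvalues (Tuple.sort hB.eigenvalues 1) :=
    Tuple.monotone_sort hB.eigenvalues (by decide : (0:Fin 2) ≤ 1)
  have hcase : (hB.eigenvalues 0 = a ∧ hB.eigenvalues 1 = c)
      ∨ (hB.eigenvalues 0 = c ∧ hB.eigenvalues 1 = a) := by
    have h1 : (hB.eigenvalues 0 - a) * (hB.eigenvalues 0 - c) = 0 := by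
      linear_combination hB.eigenvalues 0 * hsum - hprod
    rcases mul_eq_zero.1 h1 with h | h
    · exact Or.inl ⟨by linarith, by linarith⟩
    · exact Or.inr ⟨by linarith, by linarith⟩
  have hall : ∀ x : Fin 2, x = 0 ∨ x = 1 := by decide
  have hinj : Tuple.sort hB.eigenvalues 0 ≠ Tuple.sort hB.eigenvalues 1 := by
    intro h; exact absurd ((Tuple.sort hB.eigenvalues).injective h) (by decide)
  unfold sortedEig
  rw [hrev0, hrev1]
  rcases hall (Tuple.sort hB.eigenvalues 0) with h0 | h0 <;>
    rcases hall (Tuple.sort hB.eigenvalues 1) with h1 | h1 <;>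
    first
      | exact absurd (h0.trans h1.symm) hinj
      | (rw [h0] at hmono; rw [h1] at hmono ⊢; rw [h0]
         rcases hcase with ⟨ha, hc⟩ | ⟨ha, hc⟩ <;> exact ⟨by linarith, by linarith⟩)

lemma my_sortedEig_one {B : Matrix (Fin 1) (Fin 1) ℂ} (hB : B.IsHermitian) (i : Fin 1) :
    sortedEig hB i = (B 0 0).re := by
  have h := sum_eig_eq_trace hB
  rw [Fin.sum_univ_one] at h
  have h2 : hB.eigenvalues 0 = (B 0 0).re := by
    have := congrArg Complex.re h
    simpa [Matrix.trace, Matrix.diag] using this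
  have h3 : sortedEig hB i = hB.eigenvalues 0 := by
    unfold sortedEig; congr 1; exact Subsingleton.elim _ _
  rw [h3, h2]

lemma sortedEig_congr {k : ℕ} {B C : Matrix (Fin k) (Fin k) ℂ} (h : B = C)
    (hB : B.IsHermitian) (hC : C.IsHermitian) (i : Fin k) :
    sortedEig hB i = sortedEig hC i := by subst h; rfl

lemma corner_self {n : ℕ} (h : n ≤ n) (X : Matrix (Fin n) (Fin n) ℂ) :
    corner n n h X = X := by
  ext i j
  simp only [corner, Matrix.of_apply]
  congr 1 <;> exact Fin.ext (by simp)

lemma corner_two_one (h : 1 ≤ 2) (X : Matrix (Fin 2) (Fin 2) ℂ) :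
    corner 2 1 h X = !![X 1 1] := by
  ext i j
  fin_cases i; fin_cases j
  simp only [corner, Matrix.of_apply, Matrix.cons_val_zero, Matrix.cons_val']
  congr 1

end AuxLemmas

/-- the `U(2)` example.  With `r = √(y² + |z|²)` and
`D = e^{t(x+r)} + e^{t(x−r)} − e^{t(x+y)} − e^{t(x−y)}`, one has `D ≥ 0`, and the upper
triangular matrix `b` with diagonal `e^{t(x+y)/2}, e^{t(x−y)/2}` and `(1,2)`-entry
`e^{iθ}·√D` satisfies: the (decreasingly ordered) eigenvalues of `b b*` are
`e^{t(x+r)}` and `e^{t(x−r)}`, and `(b b*)₂₂ = e^{t(x−y)}`.  Moreover the Hermitian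
matrix `A` with diagonal `x+y, x−y` and off-diagonal `z, z̄` has Gelfand–Zeitlin values
`λ_1^{(2)}(A) = x + r`, `λ_2^{(2)}(A) = x − r`, `λ_1^{(1)}(A) = x − y`, so that
`λ_i^{(k)}(b b*) = exp(t·λ_i^{(k)}(A))`. -/
theorem statement_19 (x y θ t r D : ℝ) (z : ℂ) (ht : 0 < t)
    (hz : z = (‖z‖ : ℂ) * Complex.exp ((θ : ℂ) * Complex.I))
    (hr : r = Real.sqrt (y ^ 2 + ‖z‖ ^ 2))
    (hD : D = Real.exp (t * (x + r)) + Real.exp (t * (x - r))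
      - Real.exp (t * (x + y)) - Real.exp (t * (x - y)))
    (b : Matrix (Fin 2) (Fin 2) ℂ)
    (hb : b = !![(Real.exp (t * (x + y) / 2) : ℂ),
                 Complex.exp ((θ : ℂ) * Complex.I) * (Real.sqrt D : ℂ);
                 0, (Real.exp (t * (x - y) / 2) : ℂ)])
    (A : Matrix (Fin 2) (Fin 2) ℂ)
    (hA : A = !![((x + y : ℝ) : ℂ), z; (starRingEnd ℂ) z, ((x - y : ℝ) : ℂ)]) :
    0 ≤ D ∧
    GZ 2 (b * bᴴ) 2 1 = Real.exp (t * (x + r)) ∧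
    GZ 2 (b * bᴴ) 2 2 = Real.exp (t * (x - r)) ∧
    (b * bᴴ) 1 1 = (Real.exp (t * (x - y)) : ℂ) ∧
    GZ 2 A 2 1 = x + r ∧
    GZ 2 A 2 2 = x - r ∧
    GZ 2 A 1 1 = x - y := by
  have hM : (b * bᴴ).IsHermitian := Matrix.isHermitian_mul_conjTranspose_self b
  have hr0 : 0 ≤ r := hr ▸ Real.sqrt_nonneg _
  have hr2 : r ^ 2 = y ^ 2 + ‖z‖ ^ 2 := by
    rw [hr]; exact Real.sq_sqrt (by positivity)
  have hyr : |y| ≤ r := by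
    rw [hr, ← Real.sqrt_sq_eq_abs]
    exact Real.sqrt_le_sqrt (by nlinarith [sq_nonneg (‖z‖)])
  have hyr1 : y ≤ r := le_trans (le_abs_self y) hyr
  have hyr2 : -y ≤ r := le_trans (neg_le_abs y) hyr
  have hD0 : 0 ≤ D := by
    set u := Real.exp (t*r) with hu
    set w := Real.exp (-(t*r)) with hw
    set v := Real.exp (t*y) with hv
    set s := Real.exp (-(t*y)) with hs
    set E := Real.exp (t*x) with hE
    have huw : u * w = 1 := by rw [hu, hw, ← Real.exp_add]; simp
    have hvs : v * s = 1 := by rw [hv, hs, ← Real.exp_add]; simp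
    have hvu : v ≤ u := Real.exp_le_exp.2 (mul_le_mul_of_nonneg_left hyr1 ht.le)
    have huv1 : (1:ℝ) ≤ u * v := by
      rw [hu, hv, ← Real.exp_add]
      exact Real.one_le_exp (by nlinarith)
    have hupos : 0 < u := Real.exp_pos _
    have hvpos : 0 < v := Real.exp_pos _
    have hEpos : 0 < E := Real.exp_pos _
    have hcore : 0 ≤ u + w - v - s := by
      have hx1 : u * v * w = v := by rw [show u*v*w = v*(u*w) by ring, huw, mul_one]
      have hx2 : u * v * s = u := by rw [show u*v*s = u*(v*s) by ring, hvs, mul_one]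
      nlinarith [mul_nonneg (sub_nonneg.2 hvu) (sub_nonneg.2 huv1), mul_pos hupos hvpos]
    have hDe : D = E * (u + w - v - s) := by
      rw [hD, hu, hw, hv, hs, hE,
        show t*(x+r) = t*x + t*r by ring, show t*(x-r) = t*x + -(t*r) by ring,
        show t*(x+y) = t*x + t*y by ring, show t*(x-y) = t*x + -(t*y) by ring,
        Real.exp_add, Real.exp_add, Real.exp_add, Real.exp_add]
      ring
    rw [hDe]; exact mul_nonneg hEpos.le hcore
  have hunit : Complex.exp ((θ:ℂ)*Complex.I) * (starRingEnd ℂ) (Complex.exp ((θ:ℂ)*Complex.I)) = 1 := by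
    rw [← Complex.exp_conj, _root_.map_mul, Complex.conj_ofReal, Complex.conj_I,
      ← Complex.exp_add, show (θ:ℂ)*Complex.I + (θ:ℂ)*(-Complex.I) = 0 by ring, Complex.exp_zero]
  have hDsq : (Real.sqrt D : ℂ) * (Real.sqrt D : ℂ) = (D : ℂ) := by
    rw [← Complex.ofReal_mul, Real.mul_self_sqrt hD0]
  have hee : ∀ s : ℝ, (Real.exp (s/2) : ℂ) * (Real.exp (s/2) : ℂ) = (Real.exp s : ℂ) := fun s => by
    rw [← Complex.ofReal_mul, ← Real.exp_add]; norm_num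
  have hM00 : (b * bᴴ) 0 0 = ((Real.exp (t*(x+y)) + D : ℝ) : ℂ) := by
    rw [hb]
    simp only [Matrix.mul_apply, Fin.sum_univ_two, Matrix.conjTranspose_apply,
      Matrix.cons_val', Matrix.cons_val_zero, Matrix.cons_val_one, Matrix.head_cons,
      Matrix.empty_val', Matrix.cons_val_fin_one, Matrix.of_apply]
    simp only [star_mul', Complex.star_def, Complex.conj_ofReal]
    rw [hee]
    rw [show Complex.exp ((θ:ℂ)*Complex.I) * (Real.sqrt D : ℂ) *
        ((starRingEnd ℂ) (Complex.exp ((θ:ℂ)*Complex.I)) * (Real.sqrt D : ℂ)) =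
        (Complex.exp ((θ:ℂ)*Complex.I) * (starRingEnd ℂ) (Complex.exp ((θ:ℂ)*Complex.I))) *
        ((Real.sqrt D : ℂ) * (Real.sqrt D : ℂ)) by ring,
      hunit, one_mul, hDsq]
    push_cast
    ring
  have hM11 : (b * bᴴ) 1 1 = (Real.exp (t*(x-y)) : ℂ) := by
    rw [hb]
    simp only [Matrix.mul_apply, Fin.sum_univ_two, Matrix.conjTranspose_apply]
    simp only [Matrix.cons_val', Matrix.cons_val_zero, Matrix.cons_val_one, Matrix.head_cons,
      Matrix.head_fin_const, Matrix.empty_val', Matrix.cons_val_fin_one, Matrix.of_apply,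
      Matrix.vecHead, Matrix.vecTail, zero_mul, star_zero, mul_zero, zero_add,
      Complex.star_def, Complex.conj_ofReal]
    exact hee _
  have htr : (b*bᴴ).trace = ((Real.exp (t*(x+r)) + Real.exp (t*(x-r)) : ℝ) : ℂ) := by
    rw [Matrix.trace_fin_two, hM00, hM11, ← Complex.ofReal_add]
    congr 1; rw [hD]; ring
  have hdetb : b.det = ((Real.exp (t*x) : ℝ) : ℂ) := by
    have h1 : Real.exp (t*(x+y)/2) * Real.exp (t*(x-y)/2) = Real.exp (t*x) := by
      rw [← Real.exp_add]; congr 1; ring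
    rw [hb, Matrix.det_fin_two_of, mul_zero, sub_zero, ← Complex.ofReal_mul, h1]
  have hdet : (b*bᴴ).det = ((Real.exp (t*(x+r)) * Real.exp (t*(x-r)) : ℝ) : ℂ) := by
    rw [Matrix.det_mul, Matrix.det_conjTranspose, hdetb]
    rw [Complex.star_def, Complex.conj_ofReal, ← Complex.ofReal_mul]
    congr 1
    rw [← Real.exp_add, ← Real.exp_add]
    congr 1; ring
  have hle : Real.exp (t*(x-r)) ≤ Real.exp (t*(x+r)) :=
    Real.exp_le_exp.2 (by nlinarith)
  have hsumM : hM.eigenvalues 0 + hM.eigenvalues 1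
      = Real.exp (t*(x+r)) + Real.exp (t*(x-r)) := by
    have h := sum_eig_eq_trace hM
    rw [Fin.sum_univ_two, htr] at h
    exact_mod_cast h
  have hprodM : hM.eigenvalues 0 * hM.eigenvalues 1
      = Real.exp (t*(x+r)) * Real.exp (t*(x-r)) := by
    have h := hM.det_eq_prod_eigenvalues
    rw [Fin.prod_univ_two, hdet] at h
    have h3 := congrArg Complex.re h
    simpa [-Complex.ofReal_exp] using h3.symm
  have hMeig := my_sortedEig_two hM hle hsumM hprodM
  have hAH : A.IsHermitian := by
    rw [hA]
    show (!![((x + y : ℝ) : ℂ), z; (starRingEnd ℂ) z, ((x - y : ℝ) : ℂ)])ᴴ = _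
    ext i j
    fin_cases i <;> fin_cases j <;>
      simp [Matrix.conjTranspose_apply, Complex.conj_ofReal]
  have htrA : A.trace = (((x+r) + (x-r) : ℝ) : ℂ) := by
    rw [hA, Matrix.trace_fin_two]
    simp
  have hdetA : A.det = (((x+r) * (x-r) : ℝ) : ℂ) := by
    rw [hA, Matrix.det_fin_two_of]
    rw [show z * (starRingEnd ℂ) z = ((‖z‖ ^ 2 : ℝ) : ℂ) by
      rw [Complex.mul_conj, Complex.normSq_eq_norm_sq]]
    rw [show ((x+r) * (x-r) : ℝ) = (x+y)*(x-y) - ‖z‖ ^ 2 by nlinarith [hr2]]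
    push_cast
    ring
  have hleA : x - r ≤ x + r := by linarith
  have hsumA : hAH.eigenvalues 0 + hAH.eigenvalues 1 = (x+r) + (x-r) := by
    have h := sum_eig_eq_trace hAH
    rw [Fin.sum_univ_two, htrA] at h
    exact_mod_cast h
  have hprodA : hAH.eigenvalues 0 * hAH.eigenvalues 1 = (x+r) * (x-r) := by
    have h := hAH.det_eq_prod_eigenvalues
    rw [Fin.prod_univ_two, hdetA] at h
    have h3 := congrArg Complex.re h
    simpa [-Complex.ofReal_exp] using h3.symm
  have hAeig := my_sortedEig_two hAH hleA hsumA hprodA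
  refine ⟨hD0, ?_, ?_, hM11, ?_, ?_, ?_⟩
  · unfold GZ
    rw [dif_pos (⟨hM, by omega, by omega, by omega⟩ :
      (b*bᴴ).IsHermitian ∧ 1 ≤ 1 ∧ 1 ≤ 2 ∧ 2 ≤ 2)]
    rw [sortedEig_congr (corner_self (le_refl 2) (b*bᴴ)) _ hM]
    exact hMeig.1
  · unfold GZ
    rw [dif_pos (⟨hM, by omega, by omega, by omega⟩ :
      (b*bᴴ).IsHermitian ∧ 1 ≤ 2 ∧ 2 ≤ 2 ∧ 2 ≤ 2)]
    rw [sortedEig_congr (corner_self (le_refl 2) (b*bᴴ)) _ hM]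
    exact hMeig.2
  · unfold GZ
    rw [dif_pos (⟨hAH, by omega, by omega, by omega⟩ :
      A.IsHermitian ∧ 1 ≤ 1 ∧ 1 ≤ 2 ∧ 2 ≤ 2)]
    rw [sortedEig_congr (corner_self (le_refl 2) A) _ hAH]
    exact hAeig.1
  · unfold GZ
    rw [dif_pos (⟨hAH, by omega, by omega, by omega⟩ :
      A.IsHermitian ∧ 1 ≤ 2 ∧ 2 ≤ 2 ∧ 2 ≤ 2)]
    rw [sortedEig_congr (corner_self (le_refl 2) A) _ hAH]
    exact hAeig.2
  · unfold GZ
    have hc : A.IsHermitian ∧ 1 ≤ 1 ∧ 1 ≤ 1 ∧ 1 ≤ 2 := ⟨hAH, by omega, by omega, by omega⟩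
    rw [dif_pos hc]
    have h1 : (corner 2 1 hc.2.2.2 A).IsHermitian := corner_isHermitian hc.2.2.2 hAH
    have h2 : (!![A 1 1]).IsHermitian := (corner_two_one hc.2.2.2 A) ▸ h1
    rw [sortedEig_congr (corner_two_one hc.2.2.2 A) _ h2, my_sortedEig_one h2]
    have h4 : (!![A 1 1] 0 0) = A 1 1 := by simp
    rw [h4, hA]
    simp


end
end
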